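/- For d = 3 and all n ≥ 0, C_n^{(3)} equals the n-th coefficient of the power series (1 + t^2 + t^3 + t^5)/((1-t)(1-t^3)(1-t^4)(1-t^6)), i.e., C_n^{(3)} is the Cyvin sequence A028289. -/

import Mathlib

/-!
Going up a cover `v ⋖ w` adds to `v` one of `(-1, 2, 0)`, `(2, -1, 0)`, `(1, 1, -1)`, `(0, 0, 1)`:
this raises the height `v₀ + v₁ + v₂` by one and the weight `v₀ + 2 v₁ + 3 v₂` by `3` or `0`.
Hence every `v ∈ I(n e₁)` is a nonnegative solution of `v₀ + 2 v₁ + 3 v₂ + 3 m = n`; conversely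
every such solution climbs to `n e₁`, by `(1, 1, -1)` while `v₂ > 0`, then by `(2, -1, 0)` while
`v₁ > 0`, then by `(0, 0, 1)` while `m > 0`. So `C_n^{(3)}` counts the solutions of
`x + 2 y + 3 z + 3 m = n`, whose generating function `1 / ((1-t)(1-t²)(1-t³)²)` is the stated one
after cancelling `(1 + t²)(1 + t³) = 1 + t² + t³ + t⁵` against `(1 - t⁴)(1 - t⁶)`.
-/

/-- `X_3 = {(1,-2,0), (-2,1,0), (-1,-1,1), (0,0,-1)}`. -/
def X3 : Set (Fin 3 → ℤ) := {![1, -2, 0], ![-2, 1, 0], ![-1, -1, 1], ![0, 0, -1]}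

def nonneg3 (v : Fin 3 → ℤ) : Prop := ∀ i, 0 ≤ v i

/-- Covering relation `v ⋖ w` on `Λ_3 = ℤ_{≥0}^3`. -/
def cov3 (v w : Fin 3 → ℤ) : Prop := nonneg3 v ∧ nonneg3 w ∧ ∃ x ∈ X3, v = w + x

/-- The order `≺` on `Λ_3`. -/
def prec3 : (Fin 3 → ℤ) → (Fin 3 → ℤ) → Prop := Relation.TransGen cov3

/-- The principal ideal `I(v) = {v} ∪ {w : w ≺ v}`. -/
def ideal3 (v : Fin 3 → ℤ) : Set (Fin 3 → ℤ) := {v} ∪ { w | prec3 w v }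

/-- `C_n^{(3)} = |I(n·e(1))|`. -/
noncomputable def C3 (n : ℕ) : ℕ := (ideal3 ![(n : ℤ), 0, 0]).ncard

/-- `C_{n,h}^{(3)}`: the number of elements of height `h` in `I(n·e(1))`. -/
noncomputable def C3h (n h : ℕ) : ℕ :=
  ({ w ∈ ideal3 ![(n : ℤ), 0, 0] | w 0 + w 1 + w 2 = (h : ℤ) }).ncard

open PowerSeries Finset

namespace PowerSeries

variable {K : Type*} [Field K]

theorem coeff_inv_one_sub_X_pow {k : ℕ} (hk : 0 < k) (m : ℕ) :
    coeff m ((1 - X ^ k : K⟦X⟧)⁻¹) = if k ∣ m then 1 else 0 := by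
  suffices h : (1 - X ^ k : K⟦X⟧)⁻¹ = mk fun m => if k ∣ m then 1 else 0 by
    rw [h, coeff_mk]
  rw [inv_eq_iff_mul_eq_one (by simp [hk.ne'])]
  ext m
  rw [mul_sub, mul_one, map_sub, coeff_mul_X_pow', coeff_mk, coeff_mk, coeff_one]
  rcases Nat.eq_zero_or_pos m with rfl | hm
  · simp [hk.ne']
  · by_cases hkm : k ≤ m
    · simp [hm.ne', hkm, Nat.dvd_sub_iff_left hkm dvd_rfl]
    · simp [hm.ne', hkm, Nat.not_dvd_of_pos_of_lt hm (not_le.mp hkm)]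

theorem coeff_prod_inv_one_sub_X_pow {ι : Type*} [Fintype ι] {a : ι → ℕ} (ha : ∀ i, 0 < a i)
    (n : ℕ) :
    coeff n (∏ i, (1 - X ^ a i : K⟦X⟧)⁻¹) = {f : ι → ℕ | ∑ i, a i * f i = n}.ncard := by
  classical
  simp only [coeff_prod, coeff_inv_one_sub_X_pow (ha _), prod_boole, mem_univ, true_implies]
  rw [sum_boole, ← Set.ncard_coe_finset]
  congr 1
  have hinj : Function.Injective fun f : ι → ℕ => Finsupp.equivFunOnFinite.symm (a * f) :=
    fun f g h => funext fun i => Nat.eq_of_mul_eq_mul_left (ha i) (DFunLike.congr_fun h i)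
  rw [← Set.ncard_image_of_injective _ hinj]
  congr 1
  ext l
  simp only [coe_filter, mem_finsuppAntidiag, subset_univ, and_true, Set.mem_ofPred_eq,
    Set.mem_image]
  constructor
  · rintro ⟨hsum, hdvd⟩
    refine ⟨fun i => l i / a i, ?_, ?_⟩
    · simp_rw [Nat.mul_div_cancel' (hdvd _)]
      exact hsum
    · ext i
      simp [Nat.mul_div_cancel' (hdvd i)]
  · rintro ⟨f, hf, rfl⟩
    simpa using hf

theorem cyvin_genFun_eq_prod :
    (1 + X ^ 2 + X ^ 3 + X ^ 5 : K⟦X⟧) * (1 - X)⁻¹ * (1 - X ^ 3)⁻¹ * (1 - X ^ 4)⁻¹ *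
        (1 - X ^ 6)⁻¹ = ∏ i : Fin 4, (1 - X ^ ![1, 2, 3, 3] i)⁻¹ := by
  have h2 : (1 + X ^ 2 : K⟦X⟧) * (1 + X ^ 2)⁻¹ = 1 := PowerSeries.mul_inv_cancel _ (by simp)
  have h3 : (1 + X ^ 3 : K⟦X⟧) * (1 + X ^ 3)⁻¹ = 1 := PowerSeries.mul_inv_cancel _ (by simp)
  have h4 : (1 - X ^ 4 : K⟦X⟧) = (1 + X ^ 2) * (1 - X ^ 2) := by ring
  have h6 : (1 - X ^ 6 : K⟦X⟧) = (1 + X ^ 3) * (1 - X ^ 3) := by ring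
  rw [h4, h6, PowerSeries.mul_inv_rev, PowerSeries.mul_inv_rev, Fin.prod_univ_four]
  simp only [Matrix.cons_val_zero, Matrix.cons_val_one, Matrix.cons_val_two,
    Matrix.cons_val_three, Matrix.tail_cons, Matrix.head_cons, pow_one]
  linear_combination ((1 - X)⁻¹ * (1 - X ^ 2)⁻¹ * (1 - X ^ 3)⁻¹ * (1 - X ^ 3)⁻¹) *
    ((1 + X ^ 3) * (1 + X ^ 3)⁻¹ * h2 + h3)

end PowerSeries

lemma mem_ideal3_of_cov3 {u v w : Fin 3 → ℤ} (h : cov3 v w) (hw : w ∈ ideal3 u) :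
    v ∈ ideal3 u := by
  rcases hw with rfl | hw
  · exact Or.inr (.single h)
  · exact Or.inr (.head h hw)

def weight3 (v : Fin 3 → ℤ) : ℤ := v 0 + 2 * v 1 + 3 * v 2

lemma weight3_eq_or_of_cov3 {v w : Fin 3 → ℤ} (h : cov3 v w) :
    weight3 v = weight3 w ∨ weight3 v + 3 = weight3 w := by
  obtain ⟨-, -, x, hx, rfl⟩ := h
  simp only [X3, Set.mem_insert_iff, Set.mem_singleton_iff] at hx
  rcases hx with rfl | rfl | rfl | rfl <;>
    simp only [weight3, Pi.add_apply, Matrix.cons_val_zero, Matrix.cons_val_one,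
      Matrix.cons_val] <;> omega

lemma nonneg3_and_exists_weight3_of_mem_ideal3 {n : ℕ} {v : Fin 3 → ℤ}
    (hv : v ∈ ideal3 ![(n : ℤ), 0, 0]) : nonneg3 v ∧ ∃ m : ℕ, weight3 v + 3 * m = n := by
  have step {v w : Fin 3 → ℤ} (h : cov3 v w) (hw : ∃ m : ℕ, weight3 w + 3 * m = n) :
      nonneg3 v ∧ ∃ m : ℕ, weight3 v + 3 * m = n := by
    obtain ⟨m, hm⟩ := hw
    refine ⟨h.1, ?_⟩
    rcases weight3_eq_or_of_cov3 h with h' | h'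
    · exact ⟨m, by omega⟩
    · exact ⟨m + 1, by push_cast; omega⟩
  have htop : ∃ m : ℕ, weight3 ![(n : ℤ), 0, 0] + 3 * m = n := ⟨0, by simp [weight3]⟩
  rcases hv with rfl | hv
  · exact ⟨fun i => by fin_cases i <;> simp, htop⟩
  induction hv using Relation.TransGen.head_induction_on with
  | single h => exact step h htop
  | head h _ ih => exact step h ih.2

lemma cov3_of_sub_mem_X3 {a b c a' b' c' : ℕ}
    (h : ![(a : ℤ), b, c] - ![(a' : ℤ), b', c'] ∈ X3) :
    cov3 ![(a : ℤ), b, c] ![(a' : ℤ), b', c'] :=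
  ⟨fun i => by fin_cases i <;> simp, fun i => by fin_cases i <;> simp, _, h,
    (add_sub_cancel _ _).symm⟩

lemma natVec_mem_ideal3 {n : ℕ} (x y z m : ℕ) (h : x + 2 * y + 3 * z + 3 * m = n) :
    ![(x : ℤ), y, z] ∈ ideal3 ![(n : ℤ), 0, 0] := by
  match z, y, m with
  | z + 1, y, m =>
    refine mem_ideal3_of_cov3 (cov3_of_sub_mem_X3 ?_)
      (natVec_mem_ideal3 (x + 1) (y + 1) z m (by omega))
    simp only [X3, Matrix.cons_sub_cons, Matrix.empty_sub_empty]; push_cast; simp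
  | 0, y + 1, m =>
    refine mem_ideal3_of_cov3 (cov3_of_sub_mem_X3 ?_)
      (natVec_mem_ideal3 (x + 2) y 0 m (by omega))
    simp only [X3, Matrix.cons_sub_cons, Matrix.empty_sub_empty]; push_cast; simp
  | 0, 0, m + 1 =>
    refine mem_ideal3_of_cov3 (cov3_of_sub_mem_X3 ?_)
      (natVec_mem_ideal3 x 0 1 m (by omega))
    simp only [X3, Matrix.cons_sub_cons, Matrix.empty_sub_empty]; push_cast; simp
  | 0, 0, 0 =>
    obtain rfl : x = n := by omega
    exact Or.inl rfl
termination_by n - (x + y + z)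

lemma ideal3_eq_image (n : ℕ) :
    ideal3 ![(n : ℤ), 0, 0] =
      (fun f : Fin 4 → ℕ => ![(f 0 : ℤ), f 1, f 2]) '' {f | ∑ i, ![1, 2, 3, 3] i * f i = n} := by
  ext v
  simp only [Set.mem_image, Set.mem_ofPred_eq, Fin.sum_univ_four]
  constructor
  · intro hv
    obtain ⟨hnn, m, hm⟩ := nonneg3_and_exists_weight3_of_mem_ideal3 hv
    have := hnn 0; have := hnn 1; have := hnn 2
    refine ⟨![(v 0).toNat, (v 1).toNat, (v 2).toNat, m], ?_, ?_⟩
    · simp only [weight3] at hm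
      simp only [Matrix.cons_val_zero, Matrix.cons_val_one, Matrix.cons_val, one_mul]
      omega
    · ext i
      fin_cases i <;>
        simp only [Fin.reduceFinMk, Matrix.cons_val_zero, Matrix.cons_val_one, Matrix.cons_val,
          Int.ofNat_toNat] <;> omega
  · rintro ⟨f, hf, rfl⟩
    exact natVec_mem_ideal3 _ _ _ (f 3) (by simpa [mul_comm] using hf)

lemma injOn_natVec (n : ℕ) :
    Set.InjOn (fun f : Fin 4 → ℕ => ![(f 0 : ℤ), f 1, f 2])
      {f | ∑ i, ![1, 2, 3, 3] i * f i = n} := by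
  intro f hf g hg hfg
  have h0 := congrFun hfg 0; have h1 := congrFun hfg 1; have h2 := congrFun hfg 2
  simp only [Matrix.cons_val_zero, Matrix.cons_val_one, Matrix.cons_val, Nat.cast_inj,
    Fin.sum_univ_four, one_mul, Set.mem_ofPred_eq] at h0 h1 h2 hf hg
  ext i
  fin_cases i <;> simp only [Fin.reduceFinMk] <;> omega

open PowerSeries in
theorem stmt14 (n : ℕ) :
    (C3 n : ℚ) = PowerSeries.coeff n
      ((1 + (X : ℚ⟦X⟧) ^ 2 + X ^ 3 + X ^ 5) *
        (1 - (X : ℚ⟦X⟧))⁻¹ * (1 - (X : ℚ⟦X⟧) ^ 3)⁻¹ * (1 - (X : ℚ⟦X⟧) ^ 4)⁻¹ *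
        (1 - (X : ℚ⟦X⟧) ^ 6)⁻¹) := by
  rw [C3, ideal3_eq_image, (injOn_natVec n).ncard_image, cyvin_genFun_eq_prod,
    coeff_prod_inv_one_sub_X_pow (by decide)]
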